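/- Given a feasible MSPEC solution (p_v) with removed edge set C, the modified assignment where for each edge (u,v) ∈ C the higher-powered endpoint v is raised to max{w(x,v) : (x,v) ∈ C selects v} and all unselected vertices are set to power 0, is still feasible (removes all edges of C), has each power equal to the weight of an incident edge or 0, and has total power at most 2·Σ_v p_v. -/

import Mathlib

open Finset

variable {α : Type*}

/-- The graph of surviving edges: an edge of `G` survives the power assignment `p`
iff `p u + p v < w (u,v)`; edges with `p u + p v ≥ w` are removed. -/
def cutGraph (G : SimpleGraph α) (w : Sym2 α → ℝ) (p : α → ℝ) : SimpleGraph α where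
  Adj u v := G.Adj u v ∧ p u + p v < w s(u, v)
  symm := by
    refine ⟨?_⟩
    intro u v h
    refine ⟨h.1.symm, ?_⟩
    rw [Sym2.eq_swap]
    linarith [h.2]
  loopless := ⟨fun u h => G.irrefl h.1⟩

/-- MSPEC feasibility: `p s = p t = 0`, powers nonnegative, and removing the
edges `(u,v)` with `p u + p v ≥ w (u,v)` disconnects `s` from `t`. -/
def Feasible (G : SimpleGraph α) (w : Sym2 α → ℝ) (s t : α) (p : α → ℝ) : Prop :=
  p s = 0 ∧ p t = 0 ∧ (∀ v, 0 ≤ p v) ∧ ¬ (cutGraph G w p).Reachable s t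

/-- The uniform (bottleneck) power assignment: power `q` on every vertex of `V`,
and `0` on `s` and `t`. -/
def uniformP [DecidableEq α] (s t : α) (q : ℝ) : α → ℝ :=
  fun v => if v = s ∨ v = t then 0 else q

/-- Deleting a vertex set `K` from a graph (all edges incident to `K` disappear). -/
def delV (H : SimpleGraph α) (K : Set α) : SimpleGraph α where
  Adj u v := H.Adj u v ∧ u ∉ K ∧ v ∉ K
  symm := ⟨fun u v h => ⟨h.1.symm, h.2.2, h.2.1⟩⟩
  loopless := ⟨fun u h => H.irrefl h.1⟩

/-- `K` is an `s`-`t` vertex cut of `H`. -/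
def IsCut (H : SimpleGraph α) (s t : α) (K : Set α) : Prop :=
  s ∉ K ∧ t ∉ K ∧ ¬ (delV H K).Reachable s t

/-- The power represented by a copy-vertex of the discretized graph:
copy `(v, i)` represents power `i * al` (and copies of `s`, `t` have power `0`). -/
def copyPow [DecidableEq α] (s t : α) (al : ℝ) (a : α × ℕ) : ℝ :=
  if a.1 = s ∨ a.1 = t then 0 else a.2 * al

/-- Validity of a copy-vertex: each `v ∈ V` has copies `v(0), …, v(c-1)`,
while `s` and `t` are represented by their `0`-th copy only. -/
def copyValid [DecidableEq α] (s t : α) (c : ℕ) (a : α × ℕ) : Prop :=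
  if a.1 = s ∨ a.1 = t then a.2 = 0 else a.2 < c

/-- The discretized graph `G'`: vertices are copies `v(i)`; there is an edge
`(u(i), v(j))` iff `(u,v)` is an edge of `G` and `iα + jα < w (u,v)`
(copies of `s`, `t` count with power `0`). -/
def discGraph [DecidableEq α] (G : SimpleGraph α) (w : Sym2 α → ℝ) (s t : α) (al : ℝ)
    (c : ℕ) : SimpleGraph (α × ℕ) where
  Adj a b := copyValid s t c a ∧ copyValid s t c b ∧ G.Adj a.1 b.1 ∧
      copyPow s t al a + copyPow s t al b < w s(a.1, b.1)
  symm := by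
    refine ⟨?_⟩
    intro a b h
    refine ⟨h.2.1, h.1, h.2.2.1.symm, ?_⟩
    rw [Sym2.eq_swap]
    linarith [h.2.2.2]
  loopless := ⟨fun a h => G.irrefl h.2.2.1⟩

/-- A set of vertices of the discretized graph consisting only of valid copies of
vertices of `V` (i.e. copy-vertices, excluding `s` and `t`). -/
def AllowedCut (s t : α) (c : ℕ) (K : Set (α × ℕ)) : Prop :=
  ∀ a ∈ K, a.1 ≠ s ∧ a.1 ≠ t ∧ a.2 < c

/-!
For each removed edge `(u, v)` (one with `w(u,v) ≤ p u + p v`) let the endpoint of larger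
power select it, and give every vertex the largest weight of an edge it selects (or `0`).
Every removed edge is selected by an endpoint, so it stays removed. Conversely, an edge selected
by `v` has `w(u,v) ≤ p u + p v ≤ 2 p v`, so the new power of `v` is at most `2 p v`; in
particular `s` and `t` keep power `0`.
-/

section Rounding

variable [Fintype α] (G : SimpleGraph α) (w : Sym2 α → ℝ) (p : α → ℝ)

open Classical in
-- On a tie `p u = p v` both endpoints select the edge.
noncomputable def selectedNbrs (v : α) : Finset α :=
  univ.filter fun u => G.Adj v u ∧ w s(v, u) ≤ p u + p v ∧ p u ≤ p v

noncomputable def roundPower (v : α) : ℝ :=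
  (insert 0 ((selectedNbrs G w p v).image fun u => w s(v, u))).max' (insert_nonempty _ _)

variable {G w p}

theorem mem_selectedNbrs {v u : α} :
    u ∈ selectedNbrs G w p v ↔ G.Adj v u ∧ w s(v, u) ≤ p u + p v ∧ p u ≤ p v := by
  simp [selectedNbrs]

theorem roundPower_nonneg (v : α) : 0 ≤ roundPower G w p v :=
  le_max' _ 0 (mem_insert_self _ _)

theorem le_roundPower {v u : α} (hu : u ∈ selectedNbrs G w p v) :
    w s(v, u) ≤ roundPower G w p v :=
  le_max' _ _ (mem_insert_of_mem (mem_image_of_mem (fun u => w s(v, u)) hu))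

theorem roundPower_le {v : α} {b : ℝ} (hb : 0 ≤ b)
    (h : ∀ u ∈ selectedNbrs G w p v, w s(v, u) ≤ b) : roundPower G w p v ≤ b := by
  refine max'_le _ _ _ fun y hy => ?_
  rcases mem_insert.1 hy with rfl | hy
  · exact hb
  · obtain ⟨u, hu, rfl⟩ := mem_image.1 hy
    exact h u hu

theorem roundPower_eq_zero_or_weight (v : α) :
    roundPower G w p v = 0 ∨ ∃ u, G.Adj v u ∧ roundPower G w p v = w s(v, u) := by
  rcases mem_insert.1 (max'_mem _ (insert_nonempty 0
      ((selectedNbrs G w p v).image fun u => w s(v, u)))) with h | h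
  · exact Or.inl h
  · obtain ⟨u, hu, hwu⟩ := mem_image.1 h
    exact Or.inr ⟨u, (mem_selectedNbrs.1 hu).1, hwu.symm⟩

theorem roundPower_le_two_mul (hp : ∀ v, 0 ≤ p v) (v : α) :
    roundPower G w p v ≤ 2 * p v :=
  roundPower_le (by linarith [hp v]) fun u hu => by
    obtain ⟨-, hwu, hpu⟩ := mem_selectedNbrs.1 hu
    linarith

theorem roundPower_eq_zero (hp : ∀ v, 0 ≤ p v) {v : α} (hv : p v = 0) :
    roundPower G w p v = 0 :=
  le_antisymm (by simpa [hv] using roundPower_le_two_mul hp v) (roundPower_nonneg v)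

theorem weight_le_roundPower_add {u v : α} (huv : G.Adj u v) (hle : w s(u, v) ≤ p u + p v) :
    w s(u, v) ≤ roundPower G w p u + roundPower G w p v := by
  rcases le_total (p u) (p v) with h | h
  · have hsel := le_roundPower (mem_selectedNbrs.2 ⟨huv.symm, by rwa [Sym2.eq_swap], h⟩)
    rw [Sym2.eq_swap] at hsel
    linarith [roundPower_nonneg (G := G) (w := w) (p := p) u]
  · have hsel := le_roundPower (mem_selectedNbrs.2 ⟨huv, by linarith, h⟩)
    linarith [roundPower_nonneg (G := G) (w := w) (p := p) v]

end Rounding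

theorem cutGraph_anti {G : SimpleGraph α} {w : Sym2 α → ℝ} {p q : α → ℝ}
    (h : ∀ u v, G.Adj u v → w s(u, v) ≤ p u + p v → w s(u, v) ≤ q u + q v) :
    cutGraph G w q ≤ cutGraph G w p :=
  fun u v huv => ⟨huv.1, lt_of_not_ge fun hle => (h u v huv.1 hle).not_gt huv.2⟩

theorem Feasible.of_removes_more {G : SimpleGraph α} {w : Sym2 α → ℝ} {s t : α} {p q : α → ℝ}
    (hp : Feasible G w s t p) (hqs : q s = 0) (hqt : q t = 0) (hq : ∀ v, 0 ≤ q v)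
    (h : ∀ u v, G.Adj u v → w s(u, v) ≤ p u + p v → w s(u, v) ≤ q u + q v) :
    Feasible G w s t q :=
  ⟨hqs, hqt, hq, fun hr => hp.2.2.2 (hr.mono (cutGraph_anti h))⟩

theorem round_to_discrete_general [Fintype α]
    (G : SimpleGraph α) (w : Sym2 α → ℝ) (s t : α)
    (p : α → ℝ) (hp : Feasible G w s t p) :
    ∃ q : α → ℝ, Feasible G w s t q ∧
      (∀ v, q v = 0 ∨ ∃ u, G.Adj v u ∧ q v = w s(v, u)) ∧
      (∀ u v, G.Adj u v → w s(u, v) ≤ p u + p v → w s(u, v) ≤ q u + q v) ∧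
      (∑ v, q v) ≤ 2 * ∑ v, p v := by
  have ⟨hps, hpt, hp0, _⟩ := hp
  have hcover : ∀ u v, G.Adj u v → w s(u, v) ≤ p u + p v →
      w s(u, v) ≤ roundPower G w p u + roundPower G w p v :=
    fun _ _ => weight_le_roundPower_add
  refine ⟨roundPower G w p, ?_, roundPower_eq_zero_or_weight, hcover, ?_⟩
  · exact hp.of_removes_more (roundPower_eq_zero hp0 hps) (roundPower_eq_zero hp0 hpt)
      roundPower_nonneg hcover
  · rw [mul_sum]
    exact sum_le_sum fun v _ => roundPower_le_two_mul hp0 v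

/-- from a feasible MSPEC assignment `p` with removed edge set `C`, one
obtains an assignment `q` in which every power is `0` or the weight of an incident
edge, which removes every edge of `C` (hence is feasible), and whose total power is
at most `2 Σ_v p_v`. -/
theorem round_to_discrete [Fintype α]
    (G : SimpleGraph α) (w : Sym2 α → ℝ) (s t : α) (hw : ∀ e, 0 ≤ w e)
    (p : α → ℝ) (hp : Feasible G w s t p) :
    ∃ q : α → ℝ, Feasible G w s t q ∧
      (∀ v, q v = 0 ∨ ∃ u, G.Adj v u ∧ q v = w s(v, u)) ∧
      (∀ u v, G.Adj u v → w s(u, v) ≤ p u + p v → w s(u, v) ≤ q u + q v) ∧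
      (∑ v, q v) ≤ 2 * ∑ v, p v :=
  round_to_discrete_general G w s t p hp
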